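/- Let d ≥ 1 be an integer and let Ψ = (ψ_i)_{i≥1} be a sequence of reals with 0 < ψ_i < 1 for all i. If 𝔰 and 𝔯 are two distinct elements of 𝒮, then 𝒫_Ψ(𝔰) ≠ 𝒫_Ψ(𝔯); that is, the map 𝒫_Ψ : 𝒮 → ℝ^d is injective. -/

import Mathlib

/-! If `s ≠ r`, pick a coordinate `j` and the first index `n` at which `s · j` and `r · j` differ.
In `∑' i, (s i j - r i j) * ell Ψ i = 0` the terms before `n` vanish and the `n`-th has absolute
value `2 * ell Ψ n`. Since `ell Ψ (i + 1) ≤ ell Ψ i / 2`, the tail is at most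
`2 * (2 * ell Ψ (n + 1)) = 2 * Ψ n * ell Ψ n`, which is smaller because `Ψ n < 1`. -/

open MeasureTheory Set Filter
open scoped ENNReal NNReal

noncomputable section

/-- The closed cube of side `l` centered at `c` in `ℝ^d`. -/
def cubeC (d : ℕ) (c : EuclideanSpace ℝ (Fin d)) (l : ℝ) : Set (EuclideanSpace ℝ (Fin d)) :=
  {x | ∀ j, |x j - c j| ≤ l / 2}

/-- The open cube of side `l` centered at `c` in `ℝ^d`. -/
def cubeO (d : ℕ) (c : EuclideanSpace ℝ (Fin d)) (l : ℝ) : Set (EuclideanSpace ℝ (Fin d)) :=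
  {x | ∀ j, |x j - c j| < l / 2}

/-- A finite string `(s_1, …, s_n)` of elements of `{−1,1}^d`, encoded as a real-valued
function all of whose values are `±1`. -/
def IsSignStr {d n : ℕ} (s : Fin n → Fin d → ℝ) : Prop := ∀ i j, s i j = 1 ∨ s i j = -1

/-- An infinite sequence `(s_1, s_2, …)` of elements of `{−1,1}^d` (the set `𝒮`). -/
def IsSignSeq {d : ℕ} (s : ℕ → Fin d → ℝ) : Prop := ∀ i j, s i j = 1 ∨ s i j = -1

/-- `ℓ^n_Ψ = (∏_{i=1}^n ψ_i)/2^n`; here `Ψ i` stands for `ψ_{i+1}`. -/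
def ell (Ψ : ℕ → ℝ) (n : ℕ) : ℝ := (∏ i ∈ Finset.range n, Ψ i) / 2 ^ n

/-- `P^n_Ψ(𝔰)`, with coordinates `1/2 + (1/4) ∑_{i=1}^n s_i^j ℓ^{i−1}_Ψ`. -/
def Pfin (d : ℕ) (Ψ : ℕ → ℝ) {n : ℕ} (s : Fin n → Fin d → ℝ) : EuclideanSpace ℝ (Fin d) :=
  WithLp.toLp 2 (fun j => 1 / 2 + (1 / 4) * ∑ i, s i j * ell Ψ i)

/-- `𝒫_Ψ(𝔰)`, with coordinates `1/2 + (1/4) ∑_{i=1}^∞ s_i^j ℓ^{i−1}_Ψ`. -/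
def Pinf (d : ℕ) (Ψ : ℕ → ℝ) (s : ℕ → Fin d → ℝ) : EuclideanSpace ℝ (Fin d) :=
  WithLp.toLp 2 (fun j => 1 / 2 + (1 / 4) * ∑' i, s i j * ell Ψ i)

/-- The constant sequence `Θ` of `1`s. -/
def Theta : ℕ → ℝ := fun _ => 1

/-- The constant sequence `Φ` with `ψ_i = 2^{−ν}`. -/
def Phi (ν : ℝ) : ℕ → ℝ := fun _ => (2 : ℝ) ^ (-ν)

/-- `P̃^{n+1}_Ψ(𝔰) = P^{n+1}_Ψ(𝔰) − P^n_Ψ(𝔰′) + P^n_Θ(𝔰′)` (for `n = 0` this is `P^1_Ψ`). -/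
def Ptilde (d : ℕ) (Ψ : ℕ → ℝ) {n : ℕ} (s : Fin (n + 1) → Fin d → ℝ) :
    EuclideanSpace ℝ (Fin d) :=
  Pfin d Ψ s - Pfin d Ψ (fun i : Fin n => s i.castSucc) +
    Pfin d Theta (fun i : Fin n => s i.castSucc)

/-- The Cantor set `𝒞_Ψ = ⋂_{n≥1} ⋃_{𝔰 ∈ S_n} Q̄(P^n_Ψ(𝔰), ℓ^n_Ψ)`. -/
def CantorSet (d : ℕ) (Ψ : ℕ → ℝ) : Set (EuclideanSpace ℝ (Fin d)) :=
  ⋂ n : ℕ, ⋃ (s : Fin (n + 1) → Fin d → ℝ) (_ : IsSignStr s),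
    cubeC d (Pfin d Ψ s) (ell Ψ (n + 1))

/-- The closed unit cube `[0,1]^d`. -/
def unitCubeIcc (d : ℕ) : Set (EuclideanSpace ℝ (Fin d)) := {x | ∀ j, x j ∈ Icc (0 : ℝ) 1}

/-- The half-open unit cube `[0,1)^d`. -/
def unitCubeIco (d : ℕ) : Set (EuclideanSpace ℝ (Fin d)) := {x | ∀ j, x j ∈ Ico (0 : ℝ) 1}

/-- The open unit cube `(0,1)^d`. -/
def unitCubeIoo (d : ℕ) : Set (EuclideanSpace ℝ (Fin d)) := {x | ∀ j, x j ∈ Ioo (0 : ℝ) 1}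

/-- `τ_i = (1 − 2^{−(1−β)i})/(2^{1−β} − 1)`. -/
def tau (β : ℝ) (i : ℕ) : ℝ := (1 - (2 : ℝ) ^ (-((1 - β) * i))) / ((2 : ℝ) ^ (1 - β) - 1)

/-- `τ_∞ = 1/(2^{1−β} − 1)`. -/
def tauInf (β : ℝ) : ℝ := ((2 : ℝ) ^ (1 - β) - 1)⁻¹

/-- `γ` is a trajectory of the (time-dependent) vector field `u` on `[0,T]` starting at `x`:
`γ 0 = x` and `γ′(t) = u(t, γ(t))` for all `t ∈ [0,T]` (one-sided at the endpoints). -/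
def IsTrajectoryOn (d : ℕ) (u : ℝ → EuclideanSpace ℝ (Fin d) → EuclideanSpace ℝ (Fin d))
    (T : ℝ) (x : EuclideanSpace ℝ (Fin d)) (γ : ℝ → EuclideanSpace ℝ (Fin d)) : Prop :=
  γ 0 = x ∧ ∀ t ∈ Icc 0 T, HasDerivWithinAt γ (u t (γ t)) (Icc 0 T) t

/-- The integer lattice vector `k ∈ ℤ^d` viewed as a point of `ℝ^d`. -/
def intVec (d : ℕ) (k : Fin d → ℤ) : EuclideanSpace ℝ (Fin d) := WithLp.toLp 2 (fun i => (k i : ℝ))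

section Halving

variable {a : ℕ → ℝ}

theorem le_geometric_of_halving (hhalf : ∀ i, a (i + 1) ≤ a i / 2) (n k : ℕ) :
    a (k + n) ≤ (1 / 2) ^ k * a n := by
  induction k with
  | zero => simp
  | succ k ih =>
    calc a (k + 1 + n) = a (k + n + 1) := by rw [Nat.add_right_comm]
      _ ≤ a (k + n) / 2 := hhalf _
      _ ≤ (1 / 2) ^ (k + 1) * a n := by rw [pow_succ]; linarith

theorem summable_of_halving (ha : ∀ i, 0 ≤ a i) (hhalf : ∀ i, a (i + 1) ≤ a i / 2) :
    Summable a :=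
  (summable_geometric_two.mul_right (a 0)).of_nonneg_of_le ha
    fun k => by simpa using le_geometric_of_halving hhalf 0 k

theorem tsum_nat_add_le_of_halving (ha : ∀ i, 0 ≤ a i) (hhalf : ∀ i, a (i + 1) ≤ a i / 2)
    (n : ℕ) : ∑' k, a (k + n) ≤ 2 * a n :=
  calc ∑' k, a (k + n) ≤ ∑' k : ℕ, (1 / 2) ^ k * a n :=
        ((summable_nat_add_iff n).2 (summable_of_halving ha hhalf)).tsum_le_tsum
          (le_geometric_of_halving hhalf n) (summable_geometric_two.mul_right _)
    _ = 2 * a n := by rw [tsum_mul_right, tsum_geometric_two]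

end Halving

section SignedSeries

variable {w x y : ℕ → ℝ}

theorem summable_sign_mul (hw : Summable w) (hx : ∀ i, x i = 1 ∨ x i = -1) :
    Summable fun i => x i * w i :=
  hw.abs.of_norm_bounded fun i => by
    rcases hx i with h | h <;> simp [h]

theorem abs_sub_le_two_of_sign {a b : ℝ} (ha : a = 1 ∨ a = -1) (hb : b = 1 ∨ b = -1) :
    |a - b| ≤ 2 := by
  rcases ha with rfl | rfl <;> rcases hb with rfl | rfl <;> norm_num

theorem abs_sub_eq_two_of_sign {a b : ℝ} (ha : a = 1 ∨ a = -1) (hb : b = 1 ∨ b = -1)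
    (hab : a ≠ b) : |a - b| = 2 := by
  rcases ha with rfl | rfl <;> rcases hb with rfl | rfl <;> first | exact absurd rfl hab | norm_num

theorem eq_of_tsum_sign_mul_eq_of_forall_lt (hw0 : ∀ i, 0 ≤ w i) (hw : Summable w)
    (htail : ∀ n, ∑' k, w (k + (n + 1)) < w n)
    (hx : ∀ i, x i = 1 ∨ x i = -1) (hy : ∀ i, y i = 1 ∨ y i = -1)
    (hxy : ∑' i, x i * w i = ∑' i, y i * w i) (n : ℕ) (hlt : ∀ m < n, x m = y m) :
    x n = y n := by
  by_contra hne
  set f : ℕ → ℝ := fun i => (x i - y i) * w i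
  have hf_abs : ∀ i, |f i| = |x i - y i| * w i := fun i => by
    rw [abs_mul, abs_of_nonneg (hw0 i)]
  have hf : Summable f := by
    simpa [f, sub_mul] using (summable_sign_mul hw hx).sub (summable_sign_mul hw hy)
  have hf_sum : ∑' i, f i = 0 := by
    simp only [f, sub_mul]
    rw [(summable_sign_mul hw hx).tsum_sub (summable_sign_mul hw hy), hxy, sub_self]
  have hhead : ∑ i ∈ Finset.range (n + 1), f i = f n := by
    rw [Finset.sum_range_succ, Finset.sum_eq_zero fun m hm => by
      simp [f, hlt m (Finset.mem_range.1 hm)], zero_add]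
  have htail_abs : |∑' k, f (k + (n + 1))| ≤ 2 * ∑' k, w (k + (n + 1)) := by
    have hft : Summable fun k => |f (k + (n + 1))| := ((summable_nat_add_iff (n + 1)).2 hf).abs
    calc |∑' k, f (k + (n + 1))| ≤ ∑' k, |f (k + (n + 1))| := by
          simpa only [Real.norm_eq_abs] using norm_tsum_le_tsum_norm
            (f := fun k => f (k + (n + 1))) (by simpa only [Real.norm_eq_abs] using hft)
      _ ≤ ∑' k, 2 * w (k + (n + 1)) :=
          hft.tsum_le_tsum (fun k => by
            rw [hf_abs]
            exact mul_le_mul_of_nonneg_right (abs_sub_le_two_of_sign (hx _) (hy _)) (hw0 _))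
            (((summable_nat_add_iff (n + 1)).2 hw).mul_left 2)
      _ = 2 * ∑' k, w (k + (n + 1)) := tsum_mul_left
  have hsplit := hf.sum_add_tsum_nat_add (n + 1)
  rw [hhead, hf_sum, add_eq_zero_iff_eq_neg] at hsplit
  have hfn : |f n| = 2 * w n := by rw [hf_abs, abs_sub_eq_two_of_sign (hx n) (hy n) hne]
  rw [hsplit, abs_neg] at hfn
  linarith [htail n]

theorem eq_of_tsum_sign_mul_eq (hw0 : ∀ i, 0 ≤ w i) (hw : Summable w)
    (htail : ∀ n, ∑' k, w (k + (n + 1)) < w n)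
    (hx : ∀ i, x i = 1 ∨ x i = -1) (hy : ∀ i, y i = 1 ∨ y i = -1)
    (hxy : ∑' i, x i * w i = ∑' i, y i * w i) : x = y :=
  funext fun n => Nat.strong_induction_on n
    (eq_of_tsum_sign_mul_eq_of_forall_lt hw0 hw htail hx hy hxy)

end SignedSeries

section Ell

variable {Ψ : ℕ → ℝ}

theorem ell_succ (n : ℕ) : ell Ψ (n + 1) = ell Ψ n * Ψ n / 2 := by
  simp only [ell, Finset.prod_range_succ, pow_succ]
  field_simp

theorem ell_pos (hΨ : ∀ i, 0 < Ψ i) (n : ℕ) : 0 < ell Ψ n :=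
  div_pos (Finset.prod_pos fun i _ => hΨ i) (by positivity)

theorem ell_nonneg (hΨ : ∀ i, 0 ≤ Ψ i) (n : ℕ) : 0 ≤ ell Ψ n :=
  div_nonneg (Finset.prod_nonneg fun i _ => hΨ i) (by positivity)

theorem ell_succ_le_half (hΨ : ∀ i, Ψ i ∈ Icc (0 : ℝ) 1) (n : ℕ) :
    ell Ψ (n + 1) ≤ ell Ψ n / 2 := by
  rw [ell_succ]
  gcongr
  exact mul_le_of_le_one_right (ell_nonneg (fun i => (hΨ i).1) n) (hΨ n).2

theorem tsum_ell_nat_add_lt (hΨ : ∀ i, Ψ i ∈ Ioo (0 : ℝ) 1) (n : ℕ) :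
    ∑' k, ell Ψ (k + (n + 1)) < ell Ψ n := by
  have hΨ' : ∀ i, Ψ i ∈ Icc (0 : ℝ) 1 := fun i => Ioo_subset_Icc_self (hΨ i)
  calc ∑' k, ell Ψ (k + (n + 1)) ≤ 2 * ell Ψ (n + 1) :=
        tsum_nat_add_le_of_halving (ell_nonneg fun i => (hΨ' i).1) (ell_succ_le_half hΨ') _
    _ = ell Ψ n * Ψ n := by rw [ell_succ]; ring
    _ < ell Ψ n := mul_lt_of_lt_one_right (ell_pos (fun i => (hΨ i).1) n) (hΨ n).2

end Ell

theorem statement5_general (d : ℕ)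
    (Ψ : ℕ → ℝ) (hΨ : ∀ i, Ψ i ∈ Ioo (0 : ℝ) 1)
    (s r : ℕ → Fin d → ℝ) (hs : IsSignSeq s) (hr : IsSignSeq r) (hsr : s ≠ r) :
    Pinf d Ψ s ≠ Pinf d Ψ r := by
  intro heq
  obtain ⟨j, hj⟩ : ∃ j, (fun i => s i j) ≠ fun i => r i j := by
    by_contra! h
    exact hsr (funext fun i => funext fun j => congrFun (h j) i)
  have hΨ' : ∀ i, Ψ i ∈ Icc (0 : ℝ) 1 := fun i => Ioo_subset_Icc_self (hΨ i)
  have hell_nonneg : ∀ i, 0 ≤ ell Ψ i := ell_nonneg fun i => (hΨ' i).1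
  have hell_summable : Summable (ell Ψ) := summable_of_halving hell_nonneg (ell_succ_le_half hΨ')
  refine hj (eq_of_tsum_sign_mul_eq hell_nonneg hell_summable (tsum_ell_nat_add_lt hΨ)
    (fun i => hs i j) (fun i => hr i j) ?_)
  simpa [Pinf] using congrArg (· j) heq

/-- Lemma 2.2: for a sequence `Ψ` with `0 < ψ_i < 1`, the map
`𝒫_Ψ : 𝒮 → ℝ^d` is injective on sign sequences. -/
theorem statement5 (d : ℕ) (hd : 1 ≤ d)
    (Ψ : ℕ → ℝ) (hΨ : ∀ i, Ψ i ∈ Ioo (0 : ℝ) 1)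
    (s r : ℕ → Fin d → ℝ) (hs : IsSignSeq s) (hr : IsSignSeq r) (hsr : s ≠ r) :
    Pinf d Ψ s ≠ Pinf d Ψ r :=
  statement5_general d Ψ hΨ s r hs hr hsr

end
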